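/- Define the bivariate polynomial θ_G(β,γ) := Σ_{s ⊆ E} β^{|s|} ∏_{i∈V} f_{d_i(s)}(γ) for a finite multigraph G = (V,E), where d_i(s) is the degree of vertex i in the spanning subgraph (V,s) and f_n are defined by f_0=1, f_1=0, f_{n+1}=x f_n+f_{n−1}. Then for any edge e ∈ E that is not a loop, θ_G(β,γ) = (1−β)·θ_{G∖e}(β,γ) + β·θ_{G/e}(β,γ), where G∖e is the deletion and G/e the contraction of e. -/
import Mathlib


open scoped Classical

/-- The polynomials `f_n`: `f 0 = 1`, `f 1 = 0`, `f (n+2) = γ f (n+1) + f n`,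
evaluated at `γ`. -/
noncomputable def fval {R : Type*} [CommRing R] (γ : R) : ℕ → R
  | 0 => 1
  | 1 => 0
  | (n + 2) => γ * fval γ (n + 1) + fval γ n

/-- Degree of vertex `i` in the spanning subgraph `(V, s)` of the multigraph with
edge-endpoint map `ends : E → Sym2 V` (a loop counts twice). -/
noncomputable def mdeg {V E : Type*} [DecidableEq V]
    (ends : E → Sym2 V) (s : Finset E) (i : V) : ℕ :=
  ∑ e ∈ s, (if ends e = Sym2.diag i then 2 else if i ∈ ends e then 1 else 0)

/-- The theta polynomial `θ_G(β,γ) = Σ_{s ⊆ E} β^{|s|} ∏_{i ∈ V} f_{d_i(s)}(γ)`. -/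
noncomputable def theta {V E : Type*} [Fintype V] [Fintype E] [DecidableEq V]
    {R : Type*} [CommRing R] (ends : E → Sym2 V) (β γ : R) : R :=
  ∑ s : Finset E, β ^ s.card * ∏ i : V, fval γ (mdeg ends s i)

/- ### Auxiliary lemmas -/

lemma fval_add {R : Type*} [CommRing R] (γ : R) : ∀ a b : ℕ,
    fval γ (a + b) = fval γ (a+1) * fval γ (b+1) + fval γ a * fval γ b
  | 0, b => by simp [fval]
  | 1, b => by
      have : (1:ℕ) + b = b + 1 := by omega
      rw [this]
      show fval γ (b+1) = fval γ 2 * fval γ (b+1) + fval γ 1 * fval γ b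
      simp [fval]
  | (a+2), b => by
      have h1 := fval_add γ (a+1) b
      have h2 := fval_add γ a b
      have e1 : a + 2 + b = (a + b) + 2 := by omega
      have e2 : a + 1 + b = (a + b) + 1 := by omega
      rw [e2] at h1
      rw [e1, show a+2+1 = a+3 from rfl]
      show γ * fval γ (a+b+1) + fval γ (a+b) = fval γ (a+3) * fval γ (b+1) + fval γ (a+2) * fval γ b
      have h3 : fval γ (a+3) = γ * fval γ (a+2) + fval γ (a+1) := rfl
      have h4 : fval γ (a+2) = γ * fval γ (a+1) + fval γ a := rfl
      have h1' : fval γ (a+1+1) = fval γ (a+2) := by norm_num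
      rw [h1', h4] at h1
      rw [h1, h2, h3, h4]
      ring

section SumSplit
variable {E : Type*} [DecidableEq E]

lemma map_notMem (e₀ : E) (t : Finset {e : E // e ≠ e₀}) :
    e₀ ∉ t.map (Function.Embedding.subtype _) := by
  simp only [Finset.mem_map, Function.Embedding.coe_subtype]
  rintro ⟨⟨e, he⟩, -, h⟩; exact he h

lemma map_subtype_eq (e₀ : E) (t : Finset {e : E // e ≠ e₀}) :
    (t.map (Function.Embedding.subtype _)).subtype (· ≠ e₀) = t := by
  ext ⟨e, he⟩
  simp only [Finset.mem_subtype, Finset.mem_map, Function.Embedding.coe_subtype]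
  constructor
  · rintro ⟨⟨e', he'⟩, h, rfl⟩; exact h
  · intro h; exact ⟨⟨e, he⟩, h, rfl⟩

lemma subtype_map_eq (e₀ : E) (s : Finset E) (hs : e₀ ∉ s) :
    (s.subtype (· ≠ e₀)).map (Function.Embedding.subtype _) = s := by
  rw [Finset.subtype_map]
  ext e; simp only [Finset.mem_filter]
  exact ⟨fun h => h.1, fun h => ⟨h, fun he => hs (he ▸ h)⟩⟩

lemma insert_subtype_map_eq (e₀ : E) (s : Finset E) (hs : e₀ ∈ s) :
    insert e₀ ((s.subtype (· ≠ e₀)).map (Function.Embedding.subtype _)) = s := by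
  rw [Finset.subtype_map]
  ext e
  simp only [Finset.mem_insert, Finset.mem_filter]
  constructor
  · rintro (rfl | h); exact hs; exact h.1
  · intro h
    by_cases he : e = e₀
    · exact Or.inl he
    · exact Or.inr ⟨h, he⟩

lemma sum_split [Fintype E] {R : Type*} [AddCommMonoid R] (e₀ : E) (f : Finset E → R) :
    ∑ s : Finset E, f s =
      ∑ t : Finset {e : E // e ≠ e₀},
        (f (t.map (Function.Embedding.subtype _)) +
         f (insert e₀ (t.map (Function.Embedding.subtype _)))) := by
  rw [Finset.sum_add_distrib,
    ← Finset.sum_filter_add_sum_filter_not Finset.univ (fun s => e₀ ∉ s)]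
  congr 1
  · refine Finset.sum_nbij' (i := fun s => s.subtype (· ≠ e₀))
      (j := fun t => t.map (Function.Embedding.subtype _)) ?_ ?_ ?_ ?_ ?_
    · intro s hs; simp
    · intro t _
      simp only [Finset.mem_filter, Finset.mem_univ, true_and]
      exact map_notMem e₀ t
    · intro s hs
      simp only [Finset.mem_filter, Finset.mem_univ, true_and] at hs
      exact subtype_map_eq e₀ s hs
    · intro t _; exact map_subtype_eq e₀ t
    · intro s hs
      simp only [Finset.mem_filter, Finset.mem_univ, true_and] at hs
      rw [subtype_map_eq e₀ s hs]
  · refine Finset.sum_nbij' (i := fun s => s.subtype (· ≠ e₀))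
      (j := fun t => insert e₀ (t.map (Function.Embedding.subtype _))) ?_ ?_ ?_ ?_ ?_
    · intro s hs; simp
    · intro t _
      simp only [Finset.mem_filter, Finset.mem_univ, true_and, not_not]
      exact Finset.mem_insert_self _ _
    · intro s hs
      simp only [Finset.mem_filter, Finset.mem_univ, true_and, not_not] at hs
      exact insert_subtype_map_eq e₀ s hs
    · intro t _
      show (insert e₀ (t.map (Function.Embedding.subtype _))).subtype (· ≠ e₀) = t
      ext ⟨e, he⟩
      simp only [Finset.mem_subtype, Finset.mem_insert, Finset.mem_map,
        Function.Embedding.coe_subtype]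
      constructor
      · rintro (h | ⟨⟨e', he'⟩, h, rfl⟩); exact absurd h he; exact h
      · intro h; exact Or.inr ⟨⟨e, he⟩, h, rfl⟩
    · intro s hs
      simp only [Finset.mem_filter, Finset.mem_univ, true_and, not_not] at hs
      rw [insert_subtype_map_eq e₀ s hs]
end SumSplit

section Ind
variable {V : Type*} [DecidableEq V]

/-- The contribution of a single edge with endpoints `q` to the degree of `i`. -/
def ind (q : Sym2 V) (i : V) : ℕ :=
  if q = Sym2.diag i then 2 else if i ∈ q then 1 else 0

lemma mdeg_eq_sum_ind {E : Type*} (ends : E → Sym2 V) (s : Finset E) (i : V) :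
    mdeg ends s i = ∑ e ∈ s, ind (ends e) i := by
  unfold mdeg ind
  refine Finset.sum_congr rfl fun e _ => ?_
  split_ifs <;> simp_all

lemma ind_map_j (i₀ j₀ : V) (h : i₀ ≠ j₀) (q : Sym2 V) :
    ind (Sym2.map (fun v => if v = j₀ then i₀ else v) q) j₀ = 0 := by
  induction q using Sym2.ind with
  | _ a b =>
    simp only [ind, Sym2.map_pair_eq, Sym2.diag, Sym2.eq_iff, Sym2.mem_iff]
    split_ifs <;> simp_all <;> aesop

lemma ind_map_i (i₀ j₀ : V) (h : i₀ ≠ j₀) (q : Sym2 V) :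
    ind (Sym2.map (fun v => if v = j₀ then i₀ else v) q) i₀ = ind q i₀ + ind q j₀ := by
  induction q using Sym2.ind with
  | _ a b =>
    simp only [ind, Sym2.map_pair_eq, Sym2.diag, Sym2.eq_iff, Sym2.mem_iff]
    split_ifs <;> simp_all <;> aesop

lemma ind_map_other (i₀ j₀ : V) (i : V) (hi : i ≠ i₀) (hj : i ≠ j₀) (q : Sym2 V) :
    ind (Sym2.map (fun v => if v = j₀ then i₀ else v) q) i = ind q i := by
  induction q using Sym2.ind with
  | _ a b =>
    simp only [ind, Sym2.map_pair_eq, Sym2.diag, Sym2.eq_iff, Sym2.mem_iff]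
    split_ifs <;> simp_all <;> aesop

lemma ind_nonloop (i₀ j₀ : V) (h : i₀ ≠ j₀) (i : V) :
    ind (s(i₀, j₀)) i = (if i = i₀ then 1 else 0) + (if i = j₀ then 1 else 0) := by
  simp only [ind, Sym2.diag, Sym2.eq_iff, Sym2.mem_iff]
  split_ifs <;> simp_all <;> aesop
end Ind

/-- Deletion–contraction relation for `θ_G` at a non-loop edge `e₀` with endpoints
`i₀ ≠ j₀`.  The deletion `G∖e₀` has edge set `{e // e ≠ e₀}`; the contraction `G/e₀`
is realized by redirecting every `j₀`-incidence to `i₀` (leaving `j₀` isolated,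
which does not affect `θ` since `f_0 = 1`). -/
theorem stmt_14 {V E : Type*} [Fintype V] [Fintype E] [DecidableEq V] [DecidableEq E]
    {R : Type*} [CommRing R]
    (ends : E → Sym2 V) (e₀ : E) (i₀ j₀ : V)
    (h0 : ends e₀ = s(i₀, j₀)) (hloop : i₀ ≠ j₀) (β γ : R) :
    theta ends β γ =
      (1 - β) * theta (fun e : {e : E // e ≠ e₀} => ends e.1) β γ +
      β * theta (fun e : {e : E // e ≠ e₀} =>
            Sym2.map (fun v => if v = j₀ then i₀ else v) (ends e.1)) β γ := by
  classical
  unfold theta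
  rw [sum_split e₀, Finset.mul_sum, Finset.mul_sum, ← Finset.sum_add_distrib]
  refine Finset.sum_congr rfl fun t _ => ?_
  set s : Finset E := t.map (Function.Embedding.subtype _) with hs
  -- cardinalities
  have hcard : s.card = t.card := Finset.card_map _
  have hcard' : (insert e₀ s).card = t.card + 1 := by
    rw [Finset.card_insert_of_notMem (map_notMem e₀ t), hcard]
  -- degrees in the deletion
  have hdel : ∀ i, mdeg (fun e : {e : E // e ≠ e₀} => ends e.1) t i = mdeg ends s i := by
    intro i
    rw [mdeg_eq_sum_ind, mdeg_eq_sum_ind, hs, Finset.sum_map]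
    rfl
  -- degrees after inserting e₀
  have hins : ∀ i, mdeg ends (insert e₀ s) i
      = mdeg ends s i + ((if i = i₀ then 1 else 0) + (if i = j₀ then 1 else 0)) := by
    intro i
    rw [mdeg_eq_sum_ind, mdeg_eq_sum_ind, Finset.sum_insert (map_notMem e₀ t),
      add_comm, h0, ind_nonloop i₀ j₀ hloop]
  -- degrees in the contraction
  have hconsum : ∀ i, mdeg (fun e : {e : E // e ≠ e₀} =>
      Sym2.map (fun v => if v = j₀ then i₀ else v) (ends e.1)) t i
      = ∑ e ∈ s, ind (Sym2.map (fun v => if v = j₀ then i₀ else v) (ends e)) i := by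
    intro i
    rw [mdeg_eq_sum_ind, hs, Finset.sum_map]
    rfl
  have hconi : mdeg (fun e : {e : E // e ≠ e₀} =>
      Sym2.map (fun v => if v = j₀ then i₀ else v) (ends e.1)) t i₀
      = mdeg ends s i₀ + mdeg ends s j₀ := by
    rw [hconsum, mdeg_eq_sum_ind, mdeg_eq_sum_ind, ← Finset.sum_add_distrib]
    exact Finset.sum_congr rfl fun e _ => ind_map_i i₀ j₀ hloop (ends e)
  have hconj : mdeg (fun e : {e : E // e ≠ e₀} =>
      Sym2.map (fun v => if v = j₀ then i₀ else v) (ends e.1)) t j₀ = 0 := by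
    rw [hconsum]
    exact Finset.sum_eq_zero fun e _ => ind_map_j i₀ j₀ hloop (ends e)
  have hcono : ∀ i, i ≠ i₀ → i ≠ j₀ → mdeg (fun e : {e : E // e ≠ e₀} =>
      Sym2.map (fun v => if v = j₀ then i₀ else v) (ends e.1)) t i = mdeg ends s i := by
    intro i hi hj
    rw [hconsum, mdeg_eq_sum_ind]
    exact Finset.sum_congr rfl fun e _ => ind_map_other i₀ j₀ i hi hj (ends e)
  -- splitting the product over vertices
  have hj₀mem : j₀ ∈ Finset.univ.erase i₀ :=
    Finset.mem_erase.mpr ⟨Ne.symm hloop, Finset.mem_univ j₀⟩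
  have hsplit : ∀ g : V → R, ∏ i : V, g i
      = g i₀ * (g j₀ * ∏ i ∈ (Finset.univ.erase i₀).erase j₀, g i) := by
    intro g
    rw [← Finset.mul_prod_erase Finset.univ g (Finset.mem_univ i₀),
      ← Finset.mul_prod_erase _ g hj₀mem]
  set a := mdeg ends s i₀ with ha
  set b := mdeg ends s j₀ with hb
  set P : R := ∏ i ∈ (Finset.univ.erase i₀).erase j₀, fval γ (mdeg ends s i) with hP
  have hrest : ∀ i ∈ (Finset.univ.erase i₀).erase j₀, i ≠ i₀ ∧ i ≠ j₀ := by
    intro i hi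
    simp only [Finset.mem_erase] at hi
    exact ⟨hi.2.1, hi.1⟩
  have prod_del : (∏ i : V, fval γ (mdeg (fun e : {e : E // e ≠ e₀} => ends e.1) t i))
      = fval γ a * (fval γ b * P) := by
    rw [hsplit]
    rw [hdel i₀, hdel j₀]
    congr 2
    exact Finset.prod_congr rfl fun i hi => by rw [hdel i]
  have prod_ins : (∏ i : V, fval γ (mdeg ends (insert e₀ s) i))
      = fval γ (a+1) * (fval γ (b+1) * P) := by
    rw [hsplit]
    rw [hins i₀, hins j₀]
    simp only [if_pos rfl, if_neg hloop, if_neg (Ne.symm hloop)]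
    congr 2
    · exact Finset.prod_congr rfl fun i hi => by
        rw [hins i, if_neg (hrest i hi).1, if_neg (hrest i hi).2]
        norm_num
  have prod_con : (∏ i : V, fval γ (mdeg (fun e : {e : E // e ≠ e₀} =>
        Sym2.map (fun v => if v = j₀ then i₀ else v) (ends e.1)) t i))
      = fval γ (a + b) * P := by
    rw [hsplit, hconi, hconj]
    show fval γ (a+b) * (fval γ 0 * _) = _
    rw [show fval γ 0 = 1 from rfl, one_mul]
    congr 1
    exact Finset.prod_congr rfl fun i hi => by rw [hcono i (hrest i hi).1 (hrest i hi).2]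
  have prod_del' : (∏ i : V, fval γ (mdeg ends s i)) = fval γ a * (fval γ b * P) := by
    rw [← prod_del]
    exact Finset.prod_congr rfl fun i _ => by rw [hdel i]
  rw [hcard, hcard', prod_del, prod_del', prod_ins, prod_con]
  have hab := fval_add γ a b
  rw [hab]
  ring
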